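/- arXiv:2005.12025 — 3 statements merged into one kernel-verified Lean document; each statement's English description precedes it below -/
import Mathlib

section
/- Assume s < 0 and let q = 1_{B₁} + 1_{B₂} − 2·1_{B₃} ∈ ℝ^V. Then for every i ∈ V: if i ∈ B₁ then ⟨q, y_i⟩ = n(i, B₁) − s > 0; if i ∈ B₂ then ⟨q, y_i⟩ = n(i, B₂) − s > 0; if i ∈ B₃ then ⟨q, y_i⟩ = 2·(s − n(i, B₃)) < 0; and if i ∈ C then ⟨q, y_i⟩ = 0. -/
open scoped RealInnerProductSpace

/-- The `i`-th column of `y = A - s·I`, where `A` is the real adjacency matrix of `G`,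
viewed as a point of Euclidean space `ℝ^V`. -/
noncomputable def srgCol {V : Type*} [Fintype V] [DecidableEq V]
    (G : SimpleGraph V) [DecidableRel G.Adj] (s : ℝ) (i : V) : EuclideanSpace ℝ V :=
  (WithLp.equiv 2 (V → ℝ)).symm fun j => (G.adjMatrix ℝ - s • (1 : Matrix V V ℝ)) j i


/-- The affine dimension of a point set: the finrank of the direction of its affine span. -/
noncomputable def adim {V : Type*} [Fintype V] (X : Set (EuclideanSpace ℝ V)) : ℕ :=
  Module.finrank ℝ (affineSpan ℝ X).direction


/-- `nN G i U` is the number of neighbours of `i` lying in `U`. -/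
noncomputable def nN {V : Type*} (G : SimpleGraph V) (i : V) (U : Set V) : ℕ :=
  {j ∈ U | G.Adj i j}.ncard

/-! For `U ⊆ V` one has `⟪1_U, y_i⟫ = n(i, U) - s·[i ∈ U]`, so `⟪q, y_i⟫` is
`n(i, B₁) + n(i, B₂) - 2 n(i, B₃) - s (1_{B₁} + 1_{B₂} - 2·1_{B₃})(i)`. For `i` in some `B_g` the
absence of edges between different `B_h` kills two of the counts, and for `i ∈ C` the three counts
agree and cancel; the signs then follow from `s < 0`. -/

open Matrix

theorem inner_srgCol {V : Type*} [Fintype V] [DecidableEq V]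
    (G : SimpleGraph V) [DecidableRel G.Adj] (s : ℝ) (f : V → ℝ) (i : V) :
    ⟪(WithLp.equiv 2 (V → ℝ)).symm f, srgCol G s i⟫ = ∑ j ∈ G.neighborFinset i, f j - s * f i := by
  have h : ⟪(WithLp.equiv 2 (V → ℝ)).symm f, srgCol G s i⟫ =
      (f ᵥ* (G.adjMatrix ℝ - s • (1 : Matrix V V ℝ))) i := by
    simp [srgCol, PiLp.inner_apply, vecMul, dotProduct, mul_comm]
  rw [h, vecMul_sub, vecMul_smul, vecMul_one, Pi.sub_apply, G.adjMatrix_vecMul_apply,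
    Pi.smul_apply, smul_eq_mul]

theorem sum_neighborFinset_indicator_one {V : Type*} [Fintype V]
    (G : SimpleGraph V) [DecidableRel G.Adj] (U : Set V) (i : V) :
    ∑ j ∈ G.neighborFinset i, U.indicator (1 : V → ℝ) j = nN G i U := by
  classical
  rw [nN, Set.ncard_eq_toFinset_card']
  simp only [Set.indicator_apply, Pi.one_apply, Finset.sum_boole, Set.toFinset_ofPred, Nat.cast_inj]
  congr 1
  ext j
  simp [and_comm]

theorem nN_eq_zero_of_forall_not_adj {V : Type*} {G : SimpleGraph V} {i : V} {U : Set V}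
    (h : ∀ j ∈ U, ¬G.Adj i j) : nN G i U = 0 := by
  rw [nN, Set.eq_empty_of_forall_notMem (s := {j ∈ U | G.Adj i j}) fun j hj => h j hj.1 hj.2,
    Set.ncard_empty]

theorem inner_indicator_combination_srgCol {V : Type*} [Fintype V] [DecidableEq V]
    (G : SimpleGraph V) [DecidableRel G.Adj] (s : ℝ) (B₁ B₂ B₃ : Set V) (i : V) :
    ⟪(WithLp.equiv 2 (V → ℝ)).symm
        (B₁.indicator 1 + B₂.indicator 1 - (2 : ℝ) • B₃.indicator 1), srgCol G s i⟫ =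
      nN G i B₁ + nN G i B₂ - 2 * nN G i B₃ -
        s * (B₁.indicator 1 i + B₂.indicator 1 i - 2 * B₃.indicator 1 i) := by
  simp only [inner_srgCol, Pi.add_apply, Pi.sub_apply, Pi.smul_apply, smul_eq_mul,
    Finset.sum_add_distrib, Finset.sum_sub_distrib, ← Finset.mul_sum,
    sum_neighborFinset_indicator_one]

theorem stmt_10_general {V : Type*} [Fintype V] [DecidableEq V]
    (G : SimpleGraph V) [DecidableRel G.Adj] (s : ℝ) (hs : s < 0)
    (B₁ B₂ B₃ C : Set V)
    (hd₁₂ : Disjoint B₁ B₂) (hd₁₃ : Disjoint B₁ B₃) (hd₁C : Disjoint B₁ C)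
    (hd₂₃ : Disjoint B₂ B₃) (hd₂C : Disjoint B₂ C) (hd₃C : Disjoint B₃ C)
    (hB₁₂ : ∀ i ∈ B₁, ∀ j ∈ B₂, ¬G.Adj i j)
    (hB₁₃ : ∀ i ∈ B₁, ∀ j ∈ B₃, ¬G.Adj i j)
    (hB₂₃ : ∀ i ∈ B₂, ∀ j ∈ B₃, ¬G.Adj i j)
    (hC : ∀ i ∈ C, nN G i B₁ = nN G i B₂ ∧ nN G i B₂ = nN G i B₃)
    (q : EuclideanSpace ℝ V)
    (hq : q = (WithLp.equiv 2 (V → ℝ)).symm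
      (B₁.indicator 1 + B₂.indicator 1 - (2 : ℝ) • B₃.indicator 1))
    (i : V) :
    (i ∈ B₁ → ⟪q, srgCol G s i⟫ = (nN G i B₁ : ℝ) - s ∧ 0 < ⟪q, srgCol G s i⟫) ∧
    (i ∈ B₂ → ⟪q, srgCol G s i⟫ = (nN G i B₂ : ℝ) - s ∧ 0 < ⟪q, srgCol G s i⟫) ∧
    (i ∈ B₃ → ⟪q, srgCol G s i⟫ = 2 * (s - (nN G i B₃ : ℝ)) ∧ ⟪q, srgCol G s i⟫ < 0) ∧
    (i ∈ C → ⟪q, srgCol G s i⟫ = 0) := by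
  subst hq
  rw [inner_indicator_combination_srgCol]
  refine ⟨fun hi => ?_, fun hi => ?_, fun hi => ?_, fun hi => ?_⟩
  · rw [nN_eq_zero_of_forall_not_adj (hB₁₂ i hi), nN_eq_zero_of_forall_not_adj (hB₁₃ i hi),
      Set.indicator_of_mem hi, Set.indicator_of_notMem (hd₁₂.notMem_of_mem_left hi),
      Set.indicator_of_notMem (hd₁₃.notMem_of_mem_left hi), Pi.one_apply]
    constructor <;> push_cast <;> linarith [(nN G i B₁).cast_nonneg (α := ℝ)]
  · rw [nN_eq_zero_of_forall_not_adj fun j hj hij => hB₁₂ j hj i hi hij.symm,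
      nN_eq_zero_of_forall_not_adj (hB₂₃ i hi), Set.indicator_of_mem hi,
      Set.indicator_of_notMem (hd₁₂.notMem_of_mem_right hi),
      Set.indicator_of_notMem (hd₂₃.notMem_of_mem_left hi), Pi.one_apply]
    constructor <;> push_cast <;> linarith [(nN G i B₂).cast_nonneg (α := ℝ)]
  · rw [nN_eq_zero_of_forall_not_adj fun j hj hij => hB₁₃ j hj i hi hij.symm,
      nN_eq_zero_of_forall_not_adj fun j hj hij => hB₂₃ j hj i hi hij.symm,
      Set.indicator_of_mem hi, Set.indicator_of_notMem (hd₁₃.notMem_of_mem_right hi),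
      Set.indicator_of_notMem (hd₂₃.notMem_of_mem_right hi), Pi.one_apply]
    constructor <;> push_cast <;> linarith [(nN G i B₃).cast_nonneg (α := ℝ)]
  · obtain ⟨h₁₂, h₂₃⟩ := hC i hi
    rw [Set.indicator_of_notMem (hd₁C.notMem_of_mem_right hi),
      Set.indicator_of_notMem (hd₂C.notMem_of_mem_right hi),
      Set.indicator_of_notMem (hd₃C.notMem_of_mem_right hi), h₁₂, h₂₃]
    ring

theorem stmt_10 {V : Type*} [Fintype V] [DecidableEq V]
    (G : SimpleGraph V) [DecidableRel G.Adj] (v k l m : ℕ)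
    (hG : G.IsSRGWith v k l m) (s : ℝ) (hs : s < 0)
    (B₁ B₂ B₃ C : Set V)
    (hcover : B₁ ∪ B₂ ∪ B₃ ∪ C = Set.univ)
    (hd₁₂ : Disjoint B₁ B₂) (hd₁₃ : Disjoint B₁ B₃) (hd₁C : Disjoint B₁ C)
    (hd₂₃ : Disjoint B₂ B₃) (hd₂C : Disjoint B₂ C) (hd₃C : Disjoint B₃ C)
    (hB₁₂ : ∀ i ∈ B₁, ∀ j ∈ B₂, ¬G.Adj i j)
    (hB₁₃ : ∀ i ∈ B₁, ∀ j ∈ B₃, ¬G.Adj i j)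
    (hB₂₃ : ∀ i ∈ B₂, ∀ j ∈ B₃, ¬G.Adj i j)
    (hC : ∀ i ∈ C, nN G i B₁ = nN G i B₂ ∧ nN G i B₂ = nN G i B₃)
    (q : EuclideanSpace ℝ V)
    (hq : q = (WithLp.equiv 2 (V → ℝ)).symm
      (B₁.indicator 1 + B₂.indicator 1 - (2 : ℝ) • B₃.indicator 1))
    (i : V) :
    (i ∈ B₁ → ⟪q, srgCol G s i⟫ = (nN G i B₁ : ℝ) - s ∧ 0 < ⟪q, srgCol G s i⟫) ∧
    (i ∈ B₂ → ⟪q, srgCol G s i⟫ = (nN G i B₂ : ℝ) - s ∧ 0 < ⟪q, srgCol G s i⟫) ∧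
    (i ∈ B₃ → ⟪q, srgCol G s i⟫ = 2 * (s - (nN G i B₃ : ℝ)) ∧ ⟪q, srgCol G s i⟫ < 0) ∧
    (i ∈ C → ⟪q, srgCol G s i⟫ = 0) :=
  stmt_10_general G s hs B₁ B₂ B₃ C hd₁₂ hd₁₃ hd₁C hd₂₃ hd₂C hd₃C hB₁₂ hB₁₃ hB₂₃ hC q hq i
end

section
/- Assume μ ≥ 1, Γ has at least one edge, and Γ has at least one pair of distinct non-adjacent vertices. Let s = (λ − μ − √((λ−μ)² + 4(k−μ)))/2 and y = A − s·I. Then the affine dimension d of P(V) satisfies (d : ℝ) = (v − 1 − (2k + (v−1)(λ−μ))/√((λ−μ)² + 4(k−μ)))/2, i.e., the affine dimension of P(V) equals the multiplicity f of the second-largest eigenvalue of A. -/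
open scoped RealInnerProductSpace

/-! The columns `y_i` of `y = A - s • 1` all have coordinate sum `k - s ≠ 0`, so they lie on an
affine hyperplane missing the origin, and their affine dimension is `rank y - 1 = v - 1 - g`, where
`g` is the multiplicity of the eigenvalue `s`. If `r` is the other root of
`x² - (λ - μ) x - (k - μ)`, the identity `A² = k + λ A + μ (J - 1 - A)` gives
`(A - s)(A - r)(A - k) = 0`, so `(A - r)(A - k)` maps `ℝ^V` onto the `s`-eigenspace and acts on it
as the scalar `(s - r)(s - k)`. Taking traces, `(s - r)(s - k) g = v k (r + 1)`, and the feasibility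
condition `k (k - λ - 1) = (v - k - 1) μ` turns this into the stated value of `v - 1 - g`. -/

open Module

lemma finrank_vectorSpan_add_one_eq_finrank_span {K E : Type*} [Field K] [AddCommGroup E]
    [Module K E] [FiniteDimensional K E] {X : Set E} {x₀ : E} (hx₀ : x₀ ∈ X) (σ : E →ₗ[K] K)
    {c : K} (hc : c ≠ 0) (hX : ∀ x ∈ X, σ x = c) :
    finrank K (vectorSpan K X) + 1 = finrank K (Submodule.span K X) := by
  have hσ : vectorSpan K X ≤ LinearMap.ker σ := by
    rw [vectorSpan_def, Submodule.span_le]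
    rintro _ ⟨a, ha, b, hb, rfl⟩
    simp [hX a ha, hX b hb]
  have hx₀_ne : x₀ ≠ 0 := by
    rintro rfl
    exact hc (by simpa using (hX 0 hx₀).symm)
  have hsup : vectorSpan K X ⊔ K ∙ x₀ = Submodule.span K X := by
    refine le_antisymm (sup_le ?_ (Submodule.span_mono (by simpa using hx₀))) ?_
    · rw [vectorSpan_def, Submodule.span_le]
      rintro _ ⟨a, ha, b, hb, rfl⟩
      exact Submodule.sub_mem _ (Submodule.subset_span ha) (Submodule.subset_span hb)
    · refine Submodule.span_le.2 fun x hx => ?_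
      rw [← sub_add_cancel x x₀]
      exact Submodule.add_mem_sup (vsub_mem_vectorSpan K hx hx₀)
        (Submodule.mem_span_singleton_self x₀)
  have hinf : vectorSpan K X ⊓ K ∙ x₀ = ⊥ := by
    refine Submodule.eq_bot_iff _ |>.2 fun y hy => ?_
    obtain ⟨t, rfl⟩ := Submodule.mem_span_singleton.1 hy.2
    have : t * c = 0 := by simpa [hX x₀ hx₀] using hσ hy.1
    simp [(mul_eq_zero.1 this).resolve_right hc]
  have := Submodule.finrank_sup_add_finrank_inf_eq (vectorSpan K X) (K ∙ x₀)
  rwa [hsup, hinf, finrank_bot, add_zero, finrank_span_singleton hx₀_ne, eq_comm] at this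

lemma LinearMap.trace_eq_mul_finrank_of_mem_of_eq_smul {K E : Type*} [Field K] [AddCommGroup E]
    [Module K E] [FiniteDimensional K E] {p : Submodule K E} {q : E →ₗ[K] E} {d : K}
    (hd : d ≠ 0) (hq_mem : ∀ x, q x ∈ p) (hq_smul : ∀ x ∈ p, q x = d • x) :
    trace K E q = d * finrank K p := by
  have hproj : IsProj p (d⁻¹ • q) :=
    ⟨fun x => p.smul_mem _ (hq_mem x), fun x hx => by simp [hq_smul x hx, smul_smul, hd]⟩
  have := hproj.trace
  rw [map_smul, smul_eq_mul] at this
  rw [← this, mul_inv_cancel_left₀ hd]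

lemma sq_sub_add_four_mul_sub_pos {k l m : ℝ} (hlk : l < k) (hmk : m ≤ k) :
    0 < (l - m) ^ 2 + 4 * (k - m) := by
  rcases hmk.lt_or_eq with hmk_lt | rfl
  · nlinarith [sq_nonneg (l - m)]
  · nlinarith [sq_pos_of_pos (sub_pos.2 hlk)]

open Matrix in
lemma Matrix.trace_mul_eq_mul_finrank_ker {K n : Type*} [Field K] [Fintype n] [DecidableEq n]
    (M : Matrix n n K) {a b c : K} (hca : c ≠ a) (hcb : c ≠ b)
    (h : (M - c • 1) * (M - a • 1) * (M - b • 1) = 0) :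
    trace ((M - a • 1) * (M - b • 1)) =
      (c - a) * (c - b) * finrank K (LinearMap.ker (M - c • 1).mulVecLin) := by
  rw [← trace_toLin'_eq]
  refine LinearMap.trace_eq_mul_finrank_of_mem_of_eq_smul (mul_ne_zero (sub_ne_zero.2 hca)
    (sub_ne_zero.2 hcb)) (fun x => ?_) (fun x hx => ?_)
  · rw [LinearMap.mem_ker, mulVecLin_apply, toLin'_apply, mulVec_mulVec, ← Matrix.mul_assoc, h,
      zero_mulVec]
  · have hMx : M *ᵥ x = c • x := by simpa [sub_mulVec, sub_eq_zero] using hx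
    have hsub (e : K) : (M - e • 1) *ᵥ x = (c - e) • x := by
      simp [sub_mulVec, smul_mulVec, hMx, sub_smul]
    rw [toLin'_apply, ← mulVec_mulVec, hsub, mulVec_smul, hsub, smul_smul, mul_comm]

namespace SimpleGraph

variable {V : Type*} [Fintype V] {G : SimpleGraph V} [DecidableRel G.Adj]

open Matrix

lemma IsRegularOfDegree.of_one_mul_adjMatrix {α : Type*} [NonAssocSemiring α] {k : ℕ}
    (hG : G.IsRegularOfDegree k) : of 1 * G.adjMatrix α = (k : α) • of 1 := by
  ext i j
  simp [mul_adjMatrix_apply, hG j]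

lemma IsRegularOfDegree.trace_adjMatrix_mul_self {α : Type*} [NonAssocSemiring α] {k : ℕ}
    (hG : G.IsRegularOfDegree k) :
    trace (G.adjMatrix α * G.adjMatrix α) = Fintype.card V * k := by
  simp only [trace, diag_apply, adjMatrix_mul_self_apply_self, hG.degree_eq]
  simp

lemma IsSRGWith.adjMatrix_mul_self [DecidableEq V] {α : Type*} [Ring α] {n k l m : ℕ}
    (hG : G.IsSRGWith n k l m) :
    G.adjMatrix α * G.adjMatrix α =
      (k : α) • 1 + (l : α) • G.adjMatrix α + (m : α) • (of 1 - 1 - G.adjMatrix α) := by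
  classical
  have hcompl : Gᶜ.adjMatrix α = of 1 - 1 - G.adjMatrix α := by
    rw [← compl_adjMatrix_eq_adjMatrix_compl α G,
      ← one_add_adjMatrix_add_compl_adjMatrix_eq_of_one α G]
    abel
  simpa [← sq, hcompl, Nat.cast_smul_eq_nsmul] using hG.matrix_eq (α := α)

lemma IsSRGWith.lt_of_adj {n k l m : ℕ} (hG : G.IsSRGWith n k l m) {i j : V} (h : G.Adj i j) :
    l < k := by
  simpa [hG.of_adj i j h, hG.regular.degree_eq] using h.card_commonNeighbors_lt_degree

lemma IsSRGWith.le_of_not_adj {n k l m : ℕ} (hG : G.IsSRGWith n k l m) {i j : V} (hne : i ≠ j)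
    (h : ¬G.Adj i j) : m ≤ k := by
  simpa [hG.of_not_adj hne h, hG.regular.degree_eq] using
    G.card_commonNeighbors_le_degree_left i j

lemma IsSRGWith.cast_param_eq [Nonempty V] {R : Type*} [CommRing R] {n k l m : ℕ}
    (hG : G.IsSRGWith n k l m) (hlk : l < k) :
    (k : R) * (k - l - 1) = (n - k - 1) * m := by
  have hkn : k < n :=
    hG.card ▸ hG.regular.degree_eq (Classical.arbitrary V) ▸ G.degree_lt_card_verts _
  have := congrArg (Nat.cast : ℕ → R) (hG.param_eq G (by omega))
  push_cast [Nat.sub_sub, Nat.cast_sub hlk, Nat.cast_sub hkn] at this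
  linear_combination this

lemma IsSRGWith.sub_smul_one_mul_sub_smul_one [DecidableEq V] {α : Type*} [CommRing α]
    {n k l m : ℕ} (hG : G.IsSRGWith n k l m) {r s : α} (hsum : r + s = l - m)
    (hprod : r * s = m - k) :
    (G.adjMatrix α - s • 1) * (G.adjMatrix α - r • 1) = (m : α) • of 1 := by
  calc _ = G.adjMatrix α * G.adjMatrix α - (r + s) • G.adjMatrix α + (r * s) • 1 := by
        simp only [sub_mul, mul_sub, smul_mul_assoc, mul_smul_comm, mul_one, one_mul]
        module
    _ = _ := by
        rw [hG.adjMatrix_mul_self, hsum, hprod]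
        module

lemma IsSRGWith.sub_smul_one_mul_sub_smul_one_mul_sub_smul_one [DecidableEq V] {α : Type*}
    [CommRing α] {n k l m : ℕ} (hG : G.IsSRGWith n k l m) {r s : α} (hsum : r + s = l - m)
    (hprod : r * s = m - k) :
    (G.adjMatrix α - s • 1) * (G.adjMatrix α - r • 1) * (G.adjMatrix α - (k : α) • 1) = 0 := by
  rw [hG.sub_smul_one_mul_sub_smul_one hsum hprod, smul_mul_assoc, mul_sub,
    hG.regular.of_one_mul_adjMatrix, mul_smul_comm, mul_one, sub_self, smul_zero]

lemma IsSRGWith.mul_finrank_ker_eq [DecidableEq V] {K : Type*} [Field K] {n k l m : ℕ}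
    (hG : G.IsSRGWith n k l m) {r s : K} (hsum : r + s = l - m) (hprod : r * s = m - k)
    (hsr : s ≠ r) (hsk : s ≠ k) :
    (s - r) * (s - k) * finrank K (LinearMap.ker (G.adjMatrix K - s • 1).mulVecLin) =
      n * k * (r + 1) := by
  rw [← (G.adjMatrix K).trace_mul_eq_mul_finrank_ker hsr hsk
    (hG.sub_smul_one_mul_sub_smul_one_mul_sub_smul_one hsum hprod)]
  simp only [sub_mul, mul_sub, smul_mul_assoc, mul_smul_comm, mul_one, one_mul, trace_sub,
    trace_smul, trace_one, trace_adjMatrix, hG.regular.trace_adjMatrix_mul_self, hG.card,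
    smul_eq_mul]
  ring

@[simp]
lemma srgCol_apply [DecidableEq V] (s : ℝ) (i j : V) :
    srgCol G s i j = (G.adjMatrix ℝ - s • 1) j i :=
  rfl

lemma finrank_span_range_srgCol [DecidableEq V] (s : ℝ) :
    finrank ℝ (Submodule.span ℝ (Set.range (srgCol G s))) = (G.adjMatrix ℝ - s • 1).rank := by
  have : srgCol G s = (WithLp.linearEquiv 2 ℝ (V → ℝ)).symm ∘ (G.adjMatrix ℝ - s • 1).col :=
    rfl
  rw [rank_eq_finrank_span_cols, this, Set.range_comp, ← LinearEquiv.coe_toLinearMap,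
    ← Submodule.map_span, LinearEquiv.finrank_map_eq]

lemma IsRegularOfDegree.sum_srgCol [DecidableEq V] {k : ℕ} (hG : G.IsRegularOfDegree k) (s : ℝ)
    (i : V) : ∑ j, srgCol G s i j = k - s := by
  simp [Matrix.sub_apply, one_apply, Finset.sum_sub_distrib, adjMatrix_apply, G.adj_comm _ i,
    ← neighborFinset_eq_filter, hG.degree_eq]

lemma IsRegularOfDegree.adim_range_srgCol_add_finrank_ker [DecidableEq V] [Nonempty V] {k : ℕ}
    (hG : G.IsRegularOfDegree k) {s : ℝ} (hsk : s ≠ k) :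
    adim (Set.range (srgCol G s)) + 1 +
      finrank ℝ (LinearMap.ker (G.adjMatrix ℝ - s • 1).mulVecLin) = Fintype.card V := by
  let σ : EuclideanSpace ℝ V →ₗ[ℝ] ℝ := ∑ j, (EuclideanSpace.proj j).toLinearMap
  have hσ : ∀ x ∈ Set.range (srgCol G s), σ x = k - s := by
    rintro _ ⟨i, rfl⟩
    simpa [σ] using hG.sum_srgCol s i
  rw [adim, direction_affineSpan, finrank_vectorSpan_add_one_eq_finrank_span
    (Set.mem_range_self (Classical.arbitrary V)) σ (sub_ne_zero.2 hsk.symm) hσ,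
    finrank_span_range_srgCol, Matrix.rank, LinearMap.finrank_range_add_finrank_ker,
    finrank_fintype_fun_eq_card]

lemma IsSRGWith.two_mul_mul_finrank_ker_eq [DecidableEq V] [Nonempty V] {n k l m : ℕ}
    (hG : G.IsSRGWith n k l m) (hlk : l < k) {s δ : ℝ} (hδ : 0 < δ)
    (hδsq : δ ^ 2 = ((l : ℝ) - m) ^ 2 + 4 * ((k : ℝ) - m)) (hs : s = ((l : ℝ) - m - δ) / 2) :
    2 * δ * finrank ℝ (LinearMap.ker (G.adjMatrix ℝ - s • 1).mulVecLin) =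
      (n - 1) * δ + 2 * k + (n - 1) * ((l : ℝ) - m) := by
  have hparam : (k : ℝ) * (k - l - 1) = (n - k - 1) * m := hG.cast_param_eq hlk
  have hlkR : (l : ℝ) < k := by exact_mod_cast hlk
  have hsk : s < k := by rw [hs]; linarith [(m.cast_nonneg : (0 : ℝ) ≤ m)]
  set r := ((l : ℝ) - m + δ) / 2 with hr
  have hker := hG.mul_finrank_ker_eq (r := r) (by rw [hs, hr]; ring)
    (by rw [hs, hr]; linear_combination -hδsq / 4) (by rw [hs, hr]; linarith) hsk.ne
  set g : ℝ := ((finrank ℝ (LinearMap.ker (G.adjMatrix ℝ - s • 1).mulVecLin) : ℕ) : ℝ)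
  have hfactored : (k - s) * (2 * δ * g - ((n - 1) * δ + 2 * k + (n - 1) * (l - m))) = 0 := by
    rw [hs, hr] at hker
    rw [hs]
    linear_combination 2 * hker - (n - 1) / 2 * hδsq - 2 * hparam
  linarith [(mul_eq_zero.1 hfactored).resolve_left (sub_ne_zero.2 hsk.ne')]

end SimpleGraph

theorem stmt_15_general {V : Type*} [Fintype V] [DecidableEq V]
    (G : SimpleGraph V) [DecidableRel G.Adj] (v k l m : ℕ)
    (hG : G.IsSRGWith v k l m)
    (hedge : ∃ i j : V, G.Adj i j)
    (hnonadj : ∃ i j : V, i ≠ j ∧ ¬G.Adj i j)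
    (s : ℝ)
    (hs : s = ((l : ℝ) - m - Real.sqrt (((l : ℝ) - m) ^ 2 + 4 * ((k : ℝ) - m))) / 2) :
    (adim (Set.range (srgCol G s)) : ℝ) =
      ((v : ℝ) - 1 - (2 * (k : ℝ) + ((v : ℝ) - 1) * ((l : ℝ) - m)) /
          Real.sqrt (((l : ℝ) - m) ^ 2 + 4 * ((k : ℝ) - m))) / 2 := by
  obtain ⟨i₀, j₀, hadj⟩ := hedge
  obtain ⟨i₁, j₁, hne, hnadj⟩ := hnonadj
  have : Nonempty V := ⟨i₀⟩
  have hlk := hG.lt_of_adj hadj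
  have hd : 0 < ((l : ℝ) - m) ^ 2 + 4 * ((k : ℝ) - m) :=
    sq_sub_add_four_mul_sub_pos (by exact_mod_cast hlk)
      (by exact_mod_cast hG.le_of_not_adj hne hnadj)
  set δ := √(((l : ℝ) - m) ^ 2 + 4 * ((k : ℝ) - m))
  have hδ : 0 < δ := Real.sqrt_pos.2 hd
  have hg := hG.two_mul_mul_finrank_ker_eq hlk hδ (Real.sq_sqrt hd.le) hs
  have hsk : s ≠ k := by
    rw [hs]
    linarith [(Nat.cast_lt (α := ℝ)).2 hlk, (m.cast_nonneg : (0 : ℝ) ≤ m)]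
  have hdim := congrArg (Nat.cast : ℕ → ℝ) (hG.regular.adim_range_srgCol_add_finrank_ker hsk)
  rw [hG.card] at hdim
  push_cast at hdim
  field_simp
  linear_combination 2 * δ * hdim - hg

theorem stmt_15 {V : Type*} [Fintype V] [DecidableEq V]
    (G : SimpleGraph V) [DecidableRel G.Adj] (v k l m : ℕ)
    (hG : G.IsSRGWith v k l m) (hm : 1 ≤ m)
    (hedge : ∃ i j : V, G.Adj i j)
    (hnonadj : ∃ i j : V, i ≠ j ∧ ¬G.Adj i j)
    (s : ℝ)
    (hs : s = ((l : ℝ) - m - Real.sqrt (((l : ℝ) - m) ^ 2 + 4 * ((k : ℝ) - m))) / 2) :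
    (adim (Set.range (srgCol G s)) : ℝ) =
      ((v : ℝ) - 1 - (2 * (k : ℝ) + ((v : ℝ) - 1) * ((l : ℝ) - m)) /
          Real.sqrt (((l : ℝ) - m) ^ 2 + 4 * ((k : ℝ) - m))) / 2 :=
  stmt_15_general G v k l m hG hedge hnonadj s hs
end

section
/- Assume Γ has at least one edge, at least one pair of distinct non-adjacent vertices, λ − μ − 2s > 0, and s < −1. Then P(V) is a two-distance set: the set of Euclidean distances between distinct points of P(V) is exactly {√(2·(k − λ + s² + 2s)), √(2·(k − μ + s²))}, and these two values are positive and distinct. -/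
open scoped RealInnerProductSpace

/-!
Since `y = A - s I` is symmetric, `⟪y_i, y_j⟫ = (y²)_{ij}`, and the strongly regular identity
`A² = k I + λ A + μ (J - I - A)` gives `(y²)_{ij} = k + s²`, `λ - 2s` or `μ` according as `i = j`,
`i ~ j` or neither. Hence `‖y_i - y_j‖² = 2(k - λ + s² + 2s)` for adjacent and `2(k - μ + s²)`
for non-adjacent `i ≠ j`. The first value is positive because `λ < k` and `s ≠ -1`, and it is
smaller than the second because `λ - μ - 2s > 0`.
-/

namespace SimpleGraph

variable {V : Type*} [Fintype V] [DecidableEq V] {G : SimpleGraph V} [DecidableRel G.Adj]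
  {n k ℓ μ : ℕ}

omit [DecidableEq V] in
theorem IsSRGWith.lt_of_adj_s17 (h : G.IsSRGWith n k ℓ μ) {a b : V} (hab : G.Adj a b) : ℓ < k := by
  simpa [h.of_adj a b hab, h.regular a] using hab.card_commonNeighbors_lt_degree

theorem IsSRGWith.sq_adjMatrix_sub_smul_one_apply {α : Type*} [CommRing α]
    (h : G.IsSRGWith n k ℓ μ) (s : α) (i j : V) :
    ((G.adjMatrix α - s • (1 : Matrix V V α)) ^ 2) i j =
      if i = j then (k : α) + s ^ 2 else if G.Adj i j then (ℓ : α) - 2 * s else μ := by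
  have hexpand : (G.adjMatrix α - s • (1 : Matrix V V α)) ^ 2 =
      G.adjMatrix α ^ 2 - (2 * s) • G.adjMatrix α + s ^ 2 • 1 := by
    simp only [sq, sub_mul, mul_sub, Matrix.smul_mul, Matrix.mul_smul, Matrix.one_mul,
      Matrix.mul_one, smul_smul]
    module
  rw [hexpand, h.matrix_eq]
  simp only [Matrix.add_apply, Matrix.sub_apply, Matrix.smul_apply, Matrix.one_apply,
    adjMatrix_apply, compl_adj]
  rcases eq_or_ne i j with rfl | hij
  · simp
  · by_cases hadj : G.Adj i j <;> simp [hij, hadj]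

end SimpleGraph

section srgCol

variable {V : Type*} [Fintype V] [DecidableEq V] (G : SimpleGraph V) [DecidableRel G.Adj]
  (s : ℝ)

theorem inner_srgCol_s17 (i j : V) :
    ⟪srgCol G s i, srgCol G s j⟫ = ((G.adjMatrix ℝ - s • (1 : Matrix V V ℝ)) ^ 2) i j := by
  have hsymm : (G.adjMatrix ℝ - s • (1 : Matrix V V ℝ)).IsSymm :=
    G.isSymm_adjMatrix.sub (Matrix.isSymm_one.smul s)
  rw [sq, Matrix.mul_apply, EuclideanSpace.inner_eq_star_dotProduct, dotProduct]
  refine Finset.sum_congr rfl fun x _ => ?_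
  simp only [srgCol, WithLp.equiv_symm_apply, star_trivial, hsymm.apply i x]
  exact mul_comm _ _

variable {G} {n k ℓ μ : ℕ}

theorem dist_srgCol_sq (h : G.IsSRGWith n k ℓ μ) {i j : V} (hij : i ≠ j) :
    dist (srgCol G s i) (srgCol G s j) ^ 2 =
      if G.Adj i j then 2 * ((k : ℝ) - ℓ + s ^ 2 + 2 * s) else 2 * ((k : ℝ) - μ + s ^ 2) := by
  rw [dist_eq_norm, norm_sub_sq_real, ← real_inner_self_eq_norm_sq,
    ← real_inner_self_eq_norm_sq]
  simp only [inner_srgCol_s17, h.sq_adjMatrix_sub_smul_one_apply, if_neg hij]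
  split_ifs <;> ring

theorem dist_srgCol (h : G.IsSRGWith n k ℓ μ) {i j : V} (hij : i ≠ j) :
    dist (srgCol G s i) (srgCol G s j) =
      if G.Adj i j then √(2 * ((k : ℝ) - ℓ + s ^ 2 + 2 * s)) else √(2 * ((k : ℝ) - μ + s ^ 2)) := by
  rw [← Real.sqrt_sq dist_nonneg, dist_srgCol_sq s h hij, apply_ite Real.sqrt]

end srgCol

theorem stmt_17 {V : Type*} [Fintype V] [DecidableEq V]
    (G : SimpleGraph V) [DecidableRel G.Adj] (v k l m : ℕ)
    (hG : G.IsSRGWith v k l m)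
    (hedge : ∃ i j : V, G.Adj i j)
    (hnonadj : ∃ i j : V, i ≠ j ∧ ¬G.Adj i j)
    (s : ℝ) (hsl : (l : ℝ) - m - 2 * s > 0) (hs : s < -1) :
    {d : ℝ | ∃ i j : V, i ≠ j ∧ d = dist (srgCol G s i) (srgCol G s j)} =
      {Real.sqrt (2 * ((k : ℝ) - l + s ^ 2 + 2 * s)),
        Real.sqrt (2 * ((k : ℝ) - m + s ^ 2))} ∧
    0 < Real.sqrt (2 * ((k : ℝ) - l + s ^ 2 + 2 * s)) ∧
    0 < Real.sqrt (2 * ((k : ℝ) - m + s ^ 2)) ∧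
    Real.sqrt (2 * ((k : ℝ) - l + s ^ 2 + 2 * s)) ≠
      Real.sqrt (2 * ((k : ℝ) - m + s ^ 2)) := by
  obtain ⟨a, b, hab⟩ := hedge
  obtain ⟨c, d, hcd, hcd'⟩ := hnonadj
  have hlk : (l : ℝ) + 1 ≤ k := by exact_mod_cast hG.lt_of_adj_s17 hab
  have hpos_adj : 0 < 2 * ((k : ℝ) - l + s ^ 2 + 2 * s) := by nlinarith
  have hlt : 2 * ((k : ℝ) - l + s ^ 2 + 2 * s) < 2 * ((k : ℝ) - m + s ^ 2) := by linarith
  refine ⟨?_, Real.sqrt_pos.2 hpos_adj, Real.sqrt_pos.2 (hpos_adj.trans hlt),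
    (Real.sqrt_lt_sqrt hpos_adj.le hlt).ne⟩
  ext x
  constructor
  · rintro ⟨i, j, hij, rfl⟩
    rw [dist_srgCol s hG hij]
    split_ifs <;> simp
  · rintro (rfl | rfl)
    · exact ⟨a, b, hab.ne, by rw [dist_srgCol s hG hab.ne, if_pos hab]⟩
    · exact ⟨c, d, hcd, by rw [dist_srgCol s hG hcd, if_neg hcd']⟩
end
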